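/- arXiv:2211.16730 — 3 statements merged into one kernel-verified Lean document; each statement's English description precedes it below -/
import Mathlib

section
/- Conjugation identity for the Laplacian. Let n ≥ 1, let U ⊆ ℝⁿ be open, let η : U → ℝ and v : U → ℝ be twice continuously differentiable, and let s, λ ∈ ℝ. Set ξ = e^{λη}, θ = e^{sξ} and w = θ v on U. Then at every point of U: θ Δv = Δw − 2 s λ ξ ⟨∇η, ∇w⟩ + s² λ² ξ² ‖∇η‖² w − s λ² ξ ‖∇η‖² w − s λ ξ (Δη) w. -/
open RealInnerProductSpace

/-- `i`-th partial derivative of `f : ℝⁿ → ℝ`. -/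
noncomputable def pderiv' {n : ℕ} (i : Fin n)
    (f : EuclideanSpace ℝ (Fin n) → ℝ) : EuclideanSpace ℝ (Fin n) → ℝ :=
  fun x => fderiv ℝ f x (EuclideanSpace.single i 1)

/-- Laplacian `Δf = Σ_i ∂²f/∂x_i²`. -/
noncomputable def laplacian' {n : ℕ}
    (f : EuclideanSpace ℝ (Fin n) → ℝ) : EuclideanSpace ℝ (Fin n) → ℝ :=
  fun x => ∑ i : Fin n, pderiv' i (pderiv' i f) x

section helpers
variable {n : ℕ} {i : Fin n} {f g : EuclideanSpace ℝ (Fin n) → ℝ}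
  {x : EuclideanSpace ℝ (Fin n)} {c : ℝ}

lemma pderiv'_congr (h : f =ᶠ[nhds x] g) : pderiv' i f x = pderiv' i g x := by
  unfold pderiv'; rw [h.fderiv_eq]

lemma pderiv'_add (hf : DifferentiableAt ℝ f x) (hg : DifferentiableAt ℝ g x) :
    pderiv' i (fun y => f y + g y) x = pderiv' i f x + pderiv' i g x := by
  unfold pderiv'; rw [fderiv_fun_add hf hg]; simp

lemma pderiv'_mul (hf : DifferentiableAt ℝ f x) (hg : DifferentiableAt ℝ g x) :
    pderiv' i (fun y => f y * g y) x = pderiv' i f x * g x + f x * pderiv' i g x := by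
  unfold pderiv'; rw [fderiv_fun_mul hf hg]; simp; ring

lemma pderiv'_const_mul (hf : DifferentiableAt ℝ f x) (c : ℝ) :
    pderiv' i (fun y => c * f y) x = c * pderiv' i f x := by
  unfold pderiv'; rw [fderiv_const_mul hf]; simp

lemma pderiv'_exp (hf : DifferentiableAt ℝ f x) :
    pderiv' i (fun y => Real.exp (f y)) x = Real.exp (f x) * pderiv' i f x := by
  unfold pderiv'; rw [fderiv_exp hf]; simp

lemma gradient_coord (f : EuclideanSpace ℝ (Fin n) → ℝ) (x : EuclideanSpace ℝ (Fin n)) (i : Fin n) :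
    gradient f x i = pderiv' i f x := by
  have h : ⟪gradient f x, EuclideanSpace.single i (1:ℝ)⟫ = fderiv ℝ f x (EuclideanSpace.single i 1) :=
    InnerProductSpace.toDual_symm_apply
  rw [EuclideanSpace.inner_single_right] at h
  simpa [pderiv'] using h

lemma diffAt_pderiv' (hf : ContDiffAt ℝ 2 f x) (i : Fin n) :
    DifferentiableAt ℝ (pderiv' i f) x := by
  have h1 : ContDiffAt ℝ 1 (fderiv ℝ f) x := hf.fderiv_right (by norm_num)
  exact ((ContinuousLinearMap.apply ℝ ℝ
    (EuclideanSpace.single i (1:ℝ))).differentiable.differentiableAt).comp x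
    (h1.differentiableAt one_ne_zero)

end helpers

lemma first_deriv {n : ℕ} {U : Set (EuclideanSpace ℝ (Fin n))} (hU : IsOpen U)
    {η v : EuclideanSpace ℝ (Fin n) → ℝ}
    (hη : ContDiffOn ℝ 2 η U) (hv : ContDiffOn ℝ 2 v U) (s lam : ℝ) :
    ∀ y ∈ U, ∀ i : Fin n,
      pderiv' i (fun z => Real.exp (s * Real.exp (lam * η z)) * v z) y =
        Real.exp (s * Real.exp (lam * η y)) *
          (s * lam * Real.exp (lam * η y) * pderiv' i η y * v y + pderiv' i v y) := by
  intro y hy i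
  have hηd : DifferentiableAt ℝ η y :=
    (hη.contDiffAt (hU.mem_nhds hy)).differentiableAt two_ne_zero
  have hvd : DifferentiableAt ℝ v y :=
    (hv.contDiffAt (hU.mem_nhds hy)).differentiableAt two_ne_zero
  rw [pderiv'_mul (by fun_prop) hvd, pderiv'_exp (by fun_prop),
    pderiv'_const_mul (by fun_prop) s, pderiv'_exp (by fun_prop),
    pderiv'_const_mul hηd lam]
  ring

lemma second_deriv {n : ℕ} {U : Set (EuclideanSpace ℝ (Fin n))} (hU : IsOpen U)
    {η v : EuclideanSpace ℝ (Fin n) → ℝ}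
    (hη : ContDiffOn ℝ 2 η U) (hv : ContDiffOn ℝ 2 v U) (s lam : ℝ)
    {x : EuclideanSpace ℝ (Fin n)} (hx : x ∈ U) (i : Fin n) :
    pderiv' i (pderiv' i (fun z => Real.exp (s * Real.exp (lam * η z)) * v z)) x =
      Real.exp (s * Real.exp (lam * η x)) *
        (s ^ 2 * lam ^ 2 * Real.exp (lam * η x) ^ 2 * pderiv' i η x ^ 2 * v x
          + s * lam ^ 2 * Real.exp (lam * η x) * pderiv' i η x ^ 2 * v x
          + s * lam * Real.exp (lam * η x) * pderiv' i (pderiv' i η) x * v x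
          + 2 * s * lam * Real.exp (lam * η x) * pderiv' i η x * pderiv' i v x
          + pderiv' i (pderiv' i v) x) := by
  have hηd : DifferentiableAt ℝ η x :=
    (hη.contDiffAt (hU.mem_nhds hx)).differentiableAt two_ne_zero
  have hvd : DifferentiableAt ℝ v x :=
    (hv.contDiffAt (hU.mem_nhds hx)).differentiableAt two_ne_zero
  have hA : DifferentiableAt ℝ (pderiv' i η) x :=
    diffAt_pderiv' (hη.contDiffAt (hU.mem_nhds hx)) i
  have hB : DifferentiableAt ℝ (pderiv' i v) x :=
    diffAt_pderiv' (hv.contDiffAt (hU.mem_nhds hx)) i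
  have hev : pderiv' i (fun z => Real.exp (s * Real.exp (lam * η z)) * v z) =ᶠ[nhds x]
      (fun y => Real.exp (s * Real.exp (lam * η y)) *
        (s * lam * Real.exp (lam * η y) * pderiv' i η y * v y + pderiv' i v y)) :=
    Filter.eventuallyEq_of_mem (hU.mem_nhds hx)
      (fun y hy => first_deriv hU hη hv s lam y hy i)
  rw [pderiv'_congr hev]
  rw [pderiv'_mul (f := fun y => Real.exp (s * Real.exp (lam * η y))) (by fun_prop) (by fun_prop)]
  rw [pderiv'_exp (by fun_prop), pderiv'_const_mul (by fun_prop) s,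
    pderiv'_exp (by fun_prop), pderiv'_const_mul hηd lam]
  rw [pderiv'_add (by fun_prop) hB]
  rw [pderiv'_mul (f := fun y => s * lam * Real.exp (lam * η y) * pderiv' i η y) (by fun_prop) hvd]
  rw [pderiv'_mul (f := fun y => s * lam * Real.exp (lam * η y)) (by fun_prop) hA]
  rw [pderiv'_const_mul (f := fun y => Real.exp (lam * η y)) (by fun_prop) (s * lam)]
  rw [pderiv'_exp (by fun_prop), pderiv'_const_mul hηd lam]
  ring

/-- Conjugation identity for the Laplacian: with `ξ = e^{λη}`,
`θ = e^{sξ}` and `w = θ v`, at every point of the open set `U`,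
`θ Δv = Δw - 2sλξ ⟨∇η, ∇w⟩ + s²λ²ξ²‖∇η‖² w - sλ²ξ‖∇η‖² w - sλξ (Δη) w`. -/
theorem stmt_5 (n : ℕ) (hn : 1 ≤ n)
    (U : Set (EuclideanSpace ℝ (Fin n))) (hU : IsOpen U)
    (η v : EuclideanSpace ℝ (Fin n) → ℝ)
    (hη : ContDiffOn ℝ 2 η U) (hv : ContDiffOn ℝ 2 v U)
    (s lam : ℝ)
    (ξ θ w : EuclideanSpace ℝ (Fin n) → ℝ)
    (hξ : ξ = fun y => Real.exp (lam * η y))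
    (hθ : θ = fun y => Real.exp (s * ξ y))
    (hw : w = fun y => θ y * v y) :
    ∀ x ∈ U,
      θ x * laplacian' v x =
        laplacian' w x
          - 2 * s * lam * ξ x * ⟪gradient η x, gradient w x⟫
          + s ^ 2 * lam ^ 2 * (ξ x) ^ 2 * ‖gradient η x‖ ^ 2 * w x
          - s * lam ^ 2 * ξ x * ‖gradient η x‖ ^ 2 * w x
          - s * lam * ξ x * laplacian' η x * w x := by
  subst hξ hθ hw
  intro x hx
  set W : EuclideanSpace ℝ (Fin n) → ℝ :=
    fun z => Real.exp (s * Real.exp (lam * η z)) * v z with hW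
  have hgw : gradient W x = gradient W x := rfl
  have hip : ⟪gradient η x, gradient W x⟫ =
      ∑ i : Fin n, pderiv' i η x * pderiv' i W x := by
    rw [PiLp.inner_apply]
    simp [gradient_coord]
    exact Finset.sum_congr rfl fun i _ => mul_comm _ _
  have hnorm : ‖gradient η x‖ ^ 2 = ∑ i : Fin n, pderiv' i η x ^ 2 := by
    rw [← real_inner_self_eq_norm_sq, PiLp.inner_apply]
    simp [gradient_coord, sq]
  have hsum1 : ∑ i : Fin n, pderiv' i η x * pderiv' i W x =
      ∑ i : Fin n, pderiv' i η x * (Real.exp (s * Real.exp (lam * η x)) *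
        (s * lam * Real.exp (lam * η x) * pderiv' i η x * v x + pderiv' i v x)) :=
    Finset.sum_congr rfl fun i _ => by rw [first_deriv hU hη hv s lam x hx i]
  have hlap : laplacian' W x = ∑ i : Fin n,
      Real.exp (s * Real.exp (lam * η x)) *
        (s ^ 2 * lam ^ 2 * Real.exp (lam * η x) ^ 2 * pderiv' i η x ^ 2 * v x
          + s * lam ^ 2 * Real.exp (lam * η x) * pderiv' i η x ^ 2 * v x
          + s * lam * Real.exp (lam * η x) * pderiv' i (pderiv' i η) x * v x
          + 2 * s * lam * Real.exp (lam * η x) * pderiv' i η x * pderiv' i v x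
          + pderiv' i (pderiv' i v) x) :=
    Finset.sum_congr rfl fun i _ => second_deriv hU hη hv s lam hx i
  show Real.exp (s * Real.exp (lam * η x)) * laplacian' v x = _
  rw [hip, hsum1, hnorm, hlap, laplacian', laplacian']
  simp only [Finset.mul_sum, Finset.sum_mul, ← Finset.sum_sub_distrib,
    ← Finset.sum_add_distrib]
  exact Finset.sum_congr rfl fun i _ => by ring
end

section
/- Rank-one structure of the Hessian at a point where the gradient vanishes along a hypersurface (identities (3.14)–(3.15) of the paper). Let n ≥ 1, let w : ℝⁿ → ℝ be twice continuously differentiable, let p ∈ ℝⁿ, let ν ∈ ℝⁿ with ‖ν‖ = 1 and let S ⊆ ℝⁿ with p ∈ S. Assume that ∇w(x) = 0 for every x ∈ S, and that for every vector u ∈ ℝⁿ with ⟨u, ν⟩ = 0 there exists a differentiable curve γ : (−1,1) → ℝⁿ with γ(t) ∈ S for all t, γ(0) = p and γ'(0) = u. Then for all vectors a, b ∈ ℝⁿ, the Hessian of w at p satisfies Hess w(p)(a, b) = (Δw(p)) ⟨a, ν⟩ ⟨b, ν⟩; in particular, the Frobenius norm of the Hessian of w at p equals |Δw(p)|. -/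
open RealInnerProductSpace

/-- Hessian of `f` at `x`, as a bilinear form: `Hess f(a,b) = Σ_{i,j} f_{x_i x_j} a_i b_j`. -/
noncomputable def hessBilin {n : ℕ} (f : EuclideanSpace ℝ (Fin n) → ℝ)
    (x a b : EuclideanSpace ℝ (Fin n)) : ℝ :=
  ∑ i : Fin n, ∑ j : Fin n, pderiv' i (pderiv' j f) x * a i * b j

/-- If `∇w` vanishes on a set `S`, `p ∈ S`, `‖ν‖ = 1`, and every
direction `u ⟂ ν` is the velocity at `0` of a differentiable curve through `p` inside `S`,
then `Hess w(p)(a,b) = Δw(p) ⟨a,ν⟩ ⟨b,ν⟩` and the Frobenius norm of `Hess w(p)` is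
`|Δw(p)|`. -/
theorem stmt_8 (n : ℕ) (hn : 1 ≤ n)
    (w : EuclideanSpace ℝ (Fin n) → ℝ) (hw : ContDiff ℝ 2 w)
    (p ν : EuclideanSpace ℝ (Fin n)) (hν : ‖ν‖ = 1)
    (S : Set (EuclideanSpace ℝ (Fin n))) (hpS : p ∈ S)
    (hgrad : ∀ x ∈ S, gradient w x = 0)
    (hcurve : ∀ u : EuclideanSpace ℝ (Fin n), ⟪u, ν⟫ = 0 →
      ∃ γ : ℝ → EuclideanSpace ℝ (Fin n),
        (∀ t ∈ Set.Ioo (-1 : ℝ) 1, γ t ∈ S) ∧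
        DifferentiableOn ℝ γ (Set.Ioo (-1 : ℝ) 1) ∧
        γ 0 = p ∧ HasDerivAt γ u 0) :
    (∀ a b : EuclideanSpace ℝ (Fin n),
        hessBilin w p a b = laplacian' w p * ⟪a, ν⟫ * ⟪b, ν⟫) ∧
      Real.sqrt (∑ i : Fin n, ∑ j : Fin n, (pderiv' i (pderiv' j w) p) ^ 2)
        = |laplacian' w p| := by
  classical
  set f'' := fderiv ℝ (fderiv ℝ w) p with hf''def
  have hw1 : ContDiff ℝ 1 (fderiv ℝ w) := hw.fderiv_right (by norm_num)
  have hdw : DifferentiableAt ℝ (fderiv ℝ w) p :=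
    (hw1.differentiable (by norm_num)).differentiableAt
  have hF : HasFDerivAt (fderiv ℝ w) f'' p := hdw.hasFDerivAt
  -- derivative of the j-th partial derivative at p
  have hpd : ∀ j : Fin n, HasFDerivAt (pderiv' j w)
      ((ContinuousLinearMap.apply ℝ ℝ (EuclideanSpace.single j (1:ℝ))).comp f'') p := by
    intro j
    exact ((ContinuousLinearMap.apply ℝ ℝ
      (EuclideanSpace.single j (1:ℝ))).hasFDerivAt.comp p hF)
  have hM : ∀ i j : Fin n, pderiv' i (pderiv' j w) p
      = f'' (EuclideanSpace.single i 1) (EuclideanSpace.single j 1) := by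
    intro i j
    show fderiv ℝ (pderiv' j w) p (EuclideanSpace.single i 1) = _
    rw [(hpd j).fderiv]
    rfl
  -- symmetry of the second derivative
  have hsymm : ∀ a b : EuclideanSpace ℝ (Fin n), f'' a b = f'' b a := by
    intro a b
    exact (hw.contDiffAt.isSymmSndFDerivAt (by norm_num)) a b
  -- the first derivative vanishes on S
  have hfd0 : ∀ x ∈ S, fderiv ℝ w x = 0 := by
    intro x hx
    have h := hgrad x hx
    have h2 := congrArg (InnerProductSpace.toDual ℝ (EuclideanSpace ℝ (Fin n))) h
    rw [gradient] at h2
    simpa using h2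
  -- basis representation
  have hrepr : ∀ v : EuclideanSpace ℝ (Fin n),
      v = ∑ j : Fin n, v j • EuclideanSpace.single j (1:ℝ) := by
    intro v
    ext k
    have : (∑ j : Fin n, v j • EuclideanSpace.single j (1:ℝ)) k
        = ∑ j : Fin n, (v j • EuclideanSpace.single j (1:ℝ)) k :=
      by rw [WithLp.ofLp_sum, Finset.sum_apply]
    rw [this]
    simp [EuclideanSpace.single_apply]
  -- f'' u e_j = 0 for u ⟂ ν
  have hkill0 : ∀ u : EuclideanSpace ℝ (Fin n), ⟪u, ν⟫ = 0 → ∀ j : Fin n,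
      f'' u (EuclideanSpace.single j 1) = 0 := by
    intro u hu j
    obtain ⟨γ, hγS, hγdiff, hγ0, hγd⟩ := hcurve u hu
    have h1 := hpd j
    rw [← hγ0] at h1
    have h2 := h1.comp_hasDerivAt 0 hγd
    have hev : (fun _ : ℝ => (0:ℝ)) =ᶠ[nhds (0:ℝ)]
        ((pderiv' j w) ∘ γ) := by
      filter_upwards [isOpen_Ioo.mem_nhds
        (show (0:ℝ) ∈ Set.Ioo (-1:ℝ) 1 by norm_num)] with t ht
      have h0 := hfd0 (γ t) (hγS t ht)
      simp [Function.comp, pderiv', h0]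
    have h3 := h2.congr_of_eventuallyEq hev
    have h4 := (hasDerivAt_const (0:ℝ) (0:ℝ)).unique h3
    simpa using h4.symm
  -- f'' u v = 0 for u ⟂ ν and any v
  have hkill : ∀ u : EuclideanSpace ℝ (Fin n), ⟪u, ν⟫ = 0 →
      ∀ v : EuclideanSpace ℝ (Fin n), f'' u v = 0 := by
    intro u hu v
    conv_lhs => rw [hrepr v]
    rw [map_sum]
    simp [hkill0 u hu]
  -- perpendicular components
  have hperp : ∀ a : EuclideanSpace ℝ (Fin n), ⟪a - ⟪a, ν⟫ • ν, ν⟫ = 0 := by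
    intro a
    rw [inner_sub_left, real_inner_smul_left, real_inner_self_eq_norm_sq, hν]
    ring
  -- rank-one identity for f''
  have hbil : ∀ a b : EuclideanSpace ℝ (Fin n),
      f'' a b = ⟪a, ν⟫ * ⟪b, ν⟫ * f'' ν ν := by
    intro a b
    have ha : f'' a b = ⟪a, ν⟫ * f'' ν b := by
      have h1 : a = ⟪a, ν⟫ • ν + (a - ⟪a, ν⟫ • ν) := by abel
      calc f'' a b = f'' (⟪a, ν⟫ • ν + (a - ⟪a, ν⟫ • ν)) b := by rw [← h1]
        _ = ⟪a, ν⟫ * f'' ν b + f'' (a - ⟪a, ν⟫ • ν) b := by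
            rw [map_add, ContinuousLinearMap.add_apply, map_smul,
              ContinuousLinearMap.smul_apply, smul_eq_mul]
        _ = ⟪a, ν⟫ * f'' ν b := by rw [hkill _ (hperp a) b]; ring
    have hb : f'' ν b = ⟪b, ν⟫ * f'' ν ν := by
      rw [hsymm ν b]
      have h1 : b = ⟪b, ν⟫ • ν + (b - ⟪b, ν⟫ • ν) := by abel
      calc f'' b ν = f'' (⟪b, ν⟫ • ν + (b - ⟪b, ν⟫ • ν)) ν := by rw [← h1]
        _ = ⟪b, ν⟫ * f'' ν ν + f'' (b - ⟪b, ν⟫ • ν) ν := by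
            rw [map_add, ContinuousLinearMap.add_apply, map_smul,
              ContinuousLinearMap.smul_apply, smul_eq_mul]
        _ = ⟪b, ν⟫ * f'' ν ν := by rw [hkill _ (hperp b) ν]; ring
    rw [ha, hb]; ring
  -- hessBilin equals f''
  have hH : ∀ a b : EuclideanSpace ℝ (Fin n), hessBilin w p a b = f'' a b := by
    intro a b
    have h1 : f'' a b = ∑ i : Fin n, a i * f'' (EuclideanSpace.single i 1) b := by
      conv_lhs => rw [hrepr a]
      rw [map_sum, ContinuousLinearMap.sum_apply]
      exact Finset.sum_congr rfl fun i _ => by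
        rw [map_smul, ContinuousLinearMap.smul_apply, smul_eq_mul]
    have h2 : ∀ i : Fin n, f'' (EuclideanSpace.single i 1) b
        = ∑ j : Fin n, b j * f'' (EuclideanSpace.single i 1) (EuclideanSpace.single j 1) := by
      intro i
      conv_lhs => rw [hrepr b]
      rw [map_sum]
      exact Finset.sum_congr rfl fun j _ => by rw [map_smul, smul_eq_mul]
    rw [h1]
    unfold hessBilin
    refine Finset.sum_congr rfl fun i _ => ?_
    rw [h2 i, Finset.mul_sum]
    refine Finset.sum_congr rfl fun j _ => ?_
    rw [hM i j]
    ring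
  have hsum1 : ∑ i : Fin n, ν i * ν i = 1 := by
    have h : ⟪ν, ν⟫ = 1 := by
      rw [real_inner_self_eq_norm_sq, hν]; norm_num
    rw [PiLp.inner_apply] at h
    simpa [← sq] using h
  have hins : ∀ i : Fin n,
      ⟪(EuclideanSpace.single i (1:ℝ) : EuclideanSpace ℝ (Fin n)), ν⟫ = ν i := by
    intro i
    simp [EuclideanSpace.inner_single_left]
  -- the Laplacian equals f'' ν ν
  have hc : laplacian' w p = f'' ν ν := by
    unfold laplacian'
    calc (∑ i : Fin n, pderiv' i (pderiv' i w) p)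
        = ∑ i : Fin n, ν i * ν i * f'' ν ν := by
          refine Finset.sum_congr rfl fun i _ => ?_
          rw [hM i i, hbil, hins i]
      _ = (∑ i : Fin n, ν i * ν i) * f'' ν ν := by rw [Finset.sum_mul]
      _ = f'' ν ν := by rw [hsum1, one_mul]
  constructor
  · intro a b
    rw [hH a b, hbil a b, hc]
    ring
  · have hentries : ∀ i j : Fin n,
        pderiv' i (pderiv' j w) p = ν i * ν j * f'' ν ν := by
      intro i j
      rw [hM i j, hbil, hins i, hins j]
    have hinner : (∑ j : Fin n, (ν j * ν j) * (f'' ν ν) ^ 2) = (f'' ν ν) ^ 2 := by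
      rw [← Finset.sum_mul, hsum1, one_mul]
    have hsq : (∑ i : Fin n, ∑ j : Fin n, (pderiv' i (pderiv' j w) p) ^ 2)
        = (f'' ν ν) ^ 2 := by
      calc (∑ i : Fin n, ∑ j : Fin n, (pderiv' i (pderiv' j w) p) ^ 2)
          = ∑ i : Fin n, ∑ j : Fin n, (ν i * ν i) * ((ν j * ν j) * (f'' ν ν) ^ 2) := by
            refine Finset.sum_congr rfl fun i _ => Finset.sum_congr rfl fun j _ => ?_
            rw [hentries i j]; ring
        _ = ∑ i : Fin n, (ν i * ν i) * (∑ j : Fin n, (ν j * ν j) * (f'' ν ν) ^ 2) := by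
            refine Finset.sum_congr rfl fun i _ => ?_
            rw [Finset.mul_sum]
        _ = ∑ i : Fin n, (ν i * ν i) * (f'' ν ν) ^ 2 := by
            refine Finset.sum_congr rfl fun i _ => ?_
            rw [hinner]
        _ = (f'' ν ν) ^ 2 := by rw [← Finset.sum_mul, hsum1, one_mul]
    rw [hsq, Real.sqrt_sq_eq_abs, hc]
end

section
/- H²-norm bounded by the L²-norm of the Laplacian for compactly supported functions (inequality (3.32) of the paper, smooth version). Let n ≥ 1 and let G ⊂ ℝⁿ be a nonempty bounded open set. Then there exists a constant C > 0, depending only on n and G, such that for every infinitely differentiable function w : ℝⁿ → ℝ whose support is a compact subset of G, one has ∫_{ℝⁿ} ( w(x)² + ‖∇w(x)‖² + ‖Hess w(x)‖_F² ) dx ≤ C ∫_{ℝⁿ} (Δw(x))² dx. -/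
open MeasureTheory

/-- Squared Frobenius norm of the Hessian: `Σ_{i,j} (∂²f/∂x_i∂x_j)²`. -/
noncomputable def hessFrobSq {n : ℕ}
    (f : EuclideanSpace ℝ (Fin n) → ℝ) (x : EuclideanSpace ℝ (Fin n)) : ℝ :=
  ∑ i : Fin n, ∑ j : Fin n, (pderiv' i (pderiv' j f) x) ^ 2

variable {n : ℕ}

lemma pd_contDiff {f : EuclideanSpace ℝ (Fin n) → ℝ} (hf : ContDiff ℝ (⊤ : ℕ∞) f) (i : Fin n) :
    ContDiff ℝ (⊤ : ℕ∞) (pderiv' i f) :=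
  (hf.fderiv_right (by simp)).clm_apply contDiff_const

lemma pd_tsupport {f : EuclideanSpace ℝ (Fin n) → ℝ} (i : Fin n) :
    tsupport (pderiv' i f) ⊆ tsupport f := by
  apply closure_minimal ?_ (isClosed_tsupport f)
  rw [Function.support_subset_iff']
  intro x hx
  have h0 : f =ᶠ[nhds x] (fun _ => (0:ℝ)) := by
    filter_upwards [(isClosed_tsupport f).isOpen_compl.mem_nhds hx] with y hy
    exact image_eq_zero_of_notMem_tsupport hy
  simp [pderiv', h0.fderiv_eq, fderiv_fun_const]

lemma pd_compactSupport {f : EuclideanSpace ℝ (Fin n) → ℝ} (hf : HasCompactSupport f)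
    (i : Fin n) : HasCompactSupport (pderiv' i f) :=
  hf.of_isClosed_subset (isClosed_tsupport _) (pd_tsupport i)

lemma pd_clairaut {f : EuclideanSpace ℝ (Fin n) → ℝ} (hf : ContDiff ℝ (⊤ : ℕ∞) f) (i j : Fin n)
    (x : EuclideanSpace ℝ (Fin n)) :
    pderiv' i (pderiv' j f) x = pderiv' j (pderiv' i f) x := by
  have hd : Differentiable ℝ (fderiv ℝ f) := (hf.fderiv_right (m := 1) (WithTop.coe_le_coe.mpr le_top)).differentiable one_ne_zero
  have h1 : ∀ k l : Fin n, pderiv' k (pderiv' l f) x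
      = fderiv ℝ (fderiv ℝ f) x (EuclideanSpace.single k 1) (EuclideanSpace.single l 1) := by
    intro k l
    have : pderiv' l f = fun y => (fderiv ℝ f y) (EuclideanSpace.single l 1) := rfl
    rw [pderiv', this]
    rw [fderiv_clm_apply (hd x) (differentiableAt_const _)]
    simp
  rw [h1, h1]
  exact second_derivative_symmetric (fun y => ((hf.differentiable (by simp)) y).hasFDerivAt)
    (hd x).hasFDerivAt _ _

lemma integrable_of_cs {f g : EuclideanSpace ℝ (Fin n) → ℝ} (hf : Continuous f)
    (hg : Continuous g) (hgs : HasCompactSupport g) :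
    Integrable (fun x => f x * g x) := by
  apply Continuous.integrable_of_hasCompactSupport (hf.mul hg)
  exact hgs.mul_left

lemma ibp {f g : EuclideanSpace ℝ (Fin n) → ℝ} (hf : ContDiff ℝ (⊤ : ℕ∞) f) (hg : ContDiff ℝ (⊤ : ℕ∞) g)
    (hgs : HasCompactSupport g) (i : Fin n) :
    ∫ x, f x * pderiv' i g x = -∫ x, pderiv' i f x * g x := by
  apply integral_mul_fderiv_eq_neg_fderiv_mul_of_integrable
  · exact integrable_of_cs ((pd_contDiff hf i).continuous) hg.continuous hgs
  · exact integrable_of_cs hf.continuous ((pd_contDiff hg i).continuous)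
      (pd_compactSupport hgs i)
  · exact integrable_of_cs hf.continuous hg.continuous hgs
  · exact fun x _ => hf.differentiable (by simp) x
  · exact fun x _ => hg.differentiable (by simp) x

lemma grad_norm_sq (f : EuclideanSpace ℝ (Fin n) → ℝ) (x : EuclideanSpace ℝ (Fin n)) :
    ‖gradient f x‖ ^ 2 = ∑ i : Fin n, (pderiv' i f x) ^ 2 := by
  have hcoord : ∀ i, gradient f x i = pderiv' i f x := by
    intro i
    have : (inner ℝ (EuclideanSpace.single i (1:ℝ)) (gradient f x) : ℝ)
        = fderiv ℝ f x (EuclideanSpace.single i 1) := by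
      rw [real_inner_comm, gradient, InnerProductSpace.toDual_symm_apply]
    rw [EuclideanSpace.inner_single_left, map_one, one_mul] at this
    exact this
  rw [PiLp.norm_sq_eq_of_L2]
  exact Finset.sum_congr rfl fun i _ => by rw [hcoord i]; simp [sq_abs]

lemma abs_coord_le_norm (x : EuclideanSpace ℝ (Fin n)) (i : Fin n) : |x i| ≤ ‖x‖ := by
  have := abs_real_inner_le_norm (EuclideanSpace.single i (1:ℝ)) x
  simpa [EuclideanSpace.inner_single_left] using this

lemma lap_cont {f : EuclideanSpace ℝ (Fin n) → ℝ} (hf : ContDiff ℝ (⊤ : ℕ∞) f) :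
    Continuous (laplacian' f) :=
  continuous_finset_sum _ fun i _ => (pd_contDiff (pd_contDiff hf i) i).continuous

lemma lap_cs {f : EuclideanSpace ℝ (Fin n) → ℝ} (hf : HasCompactSupport f) :
    HasCompactSupport (laplacian' f) := by
  apply hf.of_isClosed_subset (isClosed_tsupport _)
  apply closure_minimal ?_ (isClosed_tsupport f)
  intro x hx
  by_contra hxf
  have h0 : ∀ i : Fin n, pderiv' i (pderiv' i f) x = 0 := fun i =>
    image_eq_zero_of_notMem_tsupport (fun h => hxf ((pd_tsupport i).trans (pd_tsupport i) h))
  exact hx (by simp [laplacian', Function.mem_support, h0])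


/-- For a nonempty bounded open set `G ⊆ ℝⁿ`, there is `C > 0` such that
for every smooth `w` with compact support contained in `G`,
`∫ (w² + ‖∇w‖² + ‖Hess w‖_F²) ≤ C ∫ (Δw)²`. -/
theorem stmt_9 (n : ℕ) (hn : 1 ≤ n)
    (G : Set (EuclideanSpace ℝ (Fin n))) (hGne : G.Nonempty) (hGo : IsOpen G)
    (hGb : Bornology.IsBounded G) :
    ∃ C > (0 : ℝ),
      ∀ w : EuclideanSpace ℝ (Fin n) → ℝ,
        ContDiff ℝ (⊤ : ℕ∞) w → HasCompactSupport w → tsupport w ⊆ G →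
        (∫ x, ((w x) ^ 2 + ‖gradient w x‖ ^ 2 + hessFrobSq w x))
          ≤ C * ∫ x, (laplacian' w x) ^ 2 := by
  obtain ⟨R, hR, hGR⟩ := hGb.subset_closedBall_lt 0 0
  refine ⟨16*R^4 + 4*R^2 + 1, by positivity, ?_⟩
  intro w hw hcs hsub
  have hwc := hw.continuous
  have hd1 : ∀ i, ContDiff ℝ (⊤ : ℕ∞) (pderiv' i w) := fun i => pd_contDiff hw i
  have hd2 : ∀ i j, ContDiff ℝ (⊤ : ℕ∞) (pderiv' i (pderiv' j w)) := fun i j => pd_contDiff (hd1 j) i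
  have hs1 : ∀ i, HasCompactSupport (pderiv' i w) := fun i => pd_compactSupport hcs i
  have hs2 : ∀ i j, HasCompactSupport (pderiv' i (pderiv' j w)) :=
    fun i j => pd_compactSupport (hs1 j) i
  have hxR : ∀ x ∈ tsupport w, ‖x‖ ≤ R := fun x hx => by
    simpa [Metric.mem_closedBall, dist_eq_norm] using hGR (hsub hx)
  set i₀ : Fin n := ⟨0, hn⟩ with hi₀
  -- abbreviations
  set A : ℝ := ∫ x, (w x) ^ 2 with hA
  set B : ℝ := ∫ x, ∑ i : Fin n, (pderiv' i w x) ^ 2 with hB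
  set D : ℝ := ∫ x, hessFrobSq w x with hD
  set L : ℝ := ∫ x, (laplacian' w x) ^ 2 with hL
  -- integrabilities
  have hIA : Integrable (fun x => (w x) ^ 2) := by
    simpa [pow_two] using integrable_of_cs hwc hwc hcs
  have hI1 : ∀ i : Fin n, Integrable (fun x => (pderiv' i w x) ^ 2) := fun i => by
    simpa [pow_two] using integrable_of_cs (hd1 i).continuous (hd1 i).continuous (hs1 i)
  have hIB : Integrable (fun x => ∑ i : Fin n, (pderiv' i w x) ^ 2) :=
    integrable_finset_sum _ fun i _ => hI1 i
  have hID : Integrable (fun x => hessFrobSq w x) := by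
    unfold hessFrobSq
    exact integrable_finset_sum _ fun i _ => integrable_finset_sum _ fun j _ => by
      simpa [pow_two] using integrable_of_cs (hd2 i j).continuous (hd2 i j).continuous (hs2 i j)
  have hIL : Integrable (fun x => (laplacian' w x) ^ 2) := by
    simpa [pow_two] using integrable_of_cs (lap_cont hw) (lap_cont hw) (lap_cs hcs)
  -- Step B : B = -∫ laplacian * w
  have hIlw : ∀ i : Fin n, Integrable (fun x => pderiv' i (pderiv' i w) x * w x) :=
    fun i => integrable_of_cs (hd2 i i).continuous hwc hcs
  have stepB : B = -∫ x, laplacian' w x * w x := by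
    have h1 : ∀ i : Fin n, ∫ x, (pderiv' i w x)^2
        = -∫ x, pderiv' i (pderiv' i w) x * w x := by
      intro i
      simp only [pow_two]
      exact ibp (hd1 i) hw hcs i
    calc B = ∑ i : Fin n, ∫ x, (pderiv' i w x)^2 :=
          integral_finset_sum _ (fun i _ => hI1 i)
      _ = ∑ i : Fin n, -∫ x, pderiv' i (pderiv' i w) x * w x :=
          Finset.sum_congr rfl (fun i _ => h1 i)
      _ = -∑ i : Fin n, ∫ x, pderiv' i (pderiv' i w) x * w x := by
          rw [Finset.sum_neg_distrib]
      _ = -∫ x, ∑ i : Fin n, pderiv' i (pderiv' i w) x * w x := by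
          rw [integral_finset_sum _ (fun i _ => hIlw i)]
      _ = -∫ x, laplacian' w x * w x := by
          congr 1
          apply integral_congr_ae
          filter_upwards with x
          simp [laplacian', Finset.sum_mul]
  -- Step Poincaré : A ≤ 4 R^2 * B
  have hBnn : ∀ i : Fin n, (0:ℝ) ≤ ∫ x, (pderiv' i w x)^2 :=
    fun i => integral_nonneg (fun x => sq_nonneg _)
  have hBsum : B = ∑ i : Fin n, ∫ x, (pderiv' i w x)^2 :=
    integral_finset_sum _ (fun i _ => hI1 i)
  have hBi_le : ∀ i : Fin n, (∫ x, (pderiv' i w x)^2) ≤ B := by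
    intro i
    rw [hBsum]
    exact Finset.single_le_sum (fun j _ => hBnn j) (Finset.mem_univ i)
  have stepA : A ≤ 4 * R^2 * B := by
    have hφd : ContDiff ℝ (⊤ : ℕ∞) (fun x => w x * w x) := hw.mul hw
    have hφcs : HasCompactSupport (fun x => w x * w x) := hcs.mul_left
    have hcoordd : ContDiff ℝ (⊤ : ℕ∞) (fun x : EuclideanSpace ℝ (Fin n) => x i₀) :=
      (EuclideanSpace.proj (𝕜 := ℝ) i₀).contDiff
    have hpdcoord : ∀ x, pderiv' i₀ (fun y : EuclideanSpace ℝ (Fin n) => y i₀) x = 1 := by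
      intro x
      have h : fderiv ℝ (fun y : EuclideanSpace ℝ (Fin n) => y i₀) x
          = (EuclideanSpace.proj i₀ : EuclideanSpace ℝ (Fin n) →L[ℝ] ℝ) :=
        (EuclideanSpace.proj i₀ : EuclideanSpace ℝ (Fin n) →L[ℝ] ℝ).fderiv
      rw [pderiv', h]
      simp
    have hpdphi : ∀ x, pderiv' i₀ (fun y => w y * w y) x
        = 2 * (w x * pderiv' i₀ w x) := by
      intro x
      rw [pderiv', fderiv_fun_mul (hw.differentiable (by simp) x) (hw.differentiable (by simp) x)]
      simp [pderiv']
      ring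
    have hibp := ibp hcoordd hφd hφcs i₀
    have h2 : ∫ x, pderiv' i₀ (fun y : EuclideanSpace ℝ (Fin n) => y i₀) x * (w x * w x) = A := by
      rw [hA]
      apply integral_congr_ae
      filter_upwards with x
      rw [hpdcoord x, one_mul, pow_two]
    have hAeq : A = ∫ x, -((x i₀) * pderiv' i₀ (fun y => w y * w y) x) := by
      rw [integral_neg, hibp, neg_neg]
      exact h2.symm
    have hpt : ∀ x, -((x i₀) * pderiv' i₀ (fun y => w y * w y) x)
        ≤ (1/2) * (w x)^2 + 2*R^2*(pderiv' i₀ w x)^2 := by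
      intro x
      rw [hpdphi]
      by_cases hx : x ∈ tsupport w
      · obtain ⟨h1a, h1b⟩ := abs_le.1 ((abs_coord_le_norm x i₀).trans (hxR x hx))
        rcases le_or_gt 0 (w x * pderiv' i₀ w x) with hab | hab
        · nlinarith [sq_nonneg (w x - 2*R*pderiv' i₀ w x),
            mul_nonneg hab (by linarith : (0:ℝ) ≤ x i₀ + R)]
        · nlinarith [sq_nonneg (w x + 2*R*pderiv' i₀ w x),
            mul_nonneg (by linarith : (0:ℝ) ≤ -(w x * pderiv' i₀ w x))
              (by linarith : (0:ℝ) ≤ R - x i₀)]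
      · rw [image_eq_zero_of_notMem_tsupport hx]
        ring_nf
        positivity
    have hIlhs : Integrable (fun x => -((x i₀) * pderiv' i₀ (fun y => w y * w y) x)) := by
      apply Integrable.neg
      exact integrable_of_cs (EuclideanSpace.proj (𝕜 := ℝ) i₀).continuous
        (pd_contDiff hφd i₀).continuous (pd_compactSupport hφcs i₀)
    have hIrhs : Integrable (fun x => (1/2) * (w x)^2 + 2*R^2*(pderiv' i₀ w x)^2) :=
      (hIA.const_mul _).add ((hI1 i₀).const_mul _)
    have hmono : A ≤ ∫ x, ((1/2) * (w x)^2 + 2*R^2*(pderiv' i₀ w x)^2) := by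
      rw [hAeq]
      exact integral_mono hIlhs hIrhs hpt
    rw [integral_add (hIA.const_mul _) ((hI1 i₀).const_mul _),
      integral_const_mul, integral_const_mul] at hmono
    have := hBi_le i₀
    nlinarith [sq_nonneg R]
  -- Step B bound : B ≤ 4 R^2 * L
  have stepBL : B ≤ 4 * R^2 * L := by
    have hkey : 8*R^2 * B ≤ A + 16*R^4 * L := by
      have hBeq : 8*R^2 * B = ∫ x, 8*R^2 * -(laplacian' w x * w x) := by
        rw [integral_const_mul, integral_neg, ← stepB]
      have hpt : ∀ x, 8*R^2 * -(laplacian' w x * w x)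
          ≤ (w x)^2 + 16*R^4 * (laplacian' w x)^2 := by
        intro x
        nlinarith [sq_nonneg (w x + 4*R^2*laplacian' w x)]
      have hIlhs : Integrable (fun x => 8*R^2 * -(laplacian' w x * w x)) :=
        ((integrable_of_cs (lap_cont hw) hwc hcs).neg).const_mul _
      have hIrhs : Integrable (fun x => (w x)^2 + 16*R^4 * (laplacian' w x)^2) :=
        hIA.add (hIL.const_mul _)
      calc 8*R^2 * B = ∫ x, 8*R^2 * -(laplacian' w x * w x) := hBeq
        _ ≤ ∫ x, ((w x)^2 + 16*R^4 * (laplacian' w x)^2) := integral_mono hIlhs hIrhs hpt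
        _ = A + 16*R^4 * L := by
            rw [integral_add hIA (hIL.const_mul _), integral_const_mul, ← hA, ← hL]
    have h4 : 4*R^2 * B ≤ 4*R^2 * (4*R^2*L) := by nlinarith
    exact le_of_mul_le_mul_left (by linarith) (by positivity : (0:ℝ) < 4*R^2)
  -- Step D : D = L
  have hIij : ∀ i j : Fin n, Integrable (fun x => (pderiv' i (pderiv' j w) x)^2) := by
    intro i j
    simpa [pow_two] using
      integrable_of_cs (hd2 i j).continuous (hd2 i j).continuous (hs2 i j)
  have stepD : D = L := by
    have key : ∀ i j : Fin n, ∫ x, (pderiv' i (pderiv' j w) x)^2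
        = ∫ x, pderiv' j (pderiv' j w) x * pderiv' i (pderiv' i w) x := by
      intro i j
      have e2 := ibp (hd2 i j) (hd1 i) (hs1 i) j
      have e4 := ibp (hd2 j j) (hd1 i) (hs1 i) i
      calc ∫ x, (pderiv' i (pderiv' j w) x)^2
          = ∫ x, pderiv' i (pderiv' j w) x * pderiv' j (pderiv' i w) x := by
            apply integral_congr_ae
            filter_upwards with x
            rw [pow_two]
            nth_rewrite 2 [pd_clairaut hw i j]
            rfl
        _ = -∫ x, pderiv' j (pderiv' i (pderiv' j w)) x * pderiv' i w x := e2
        _ = -∫ x, pderiv' i (pderiv' j (pderiv' j w)) x * pderiv' i w x := by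
            congr 1
            apply integral_congr_ae
            filter_upwards with x
            rw [pd_clairaut (hd1 j) j i]
        _ = ∫ x, pderiv' j (pderiv' j w) x * pderiv' i (pderiv' i w) x := by
            rw [e4]
    have hIjjii : ∀ i j : Fin n,
        Integrable (fun x => pderiv' j (pderiv' j w) x * pderiv' i (pderiv' i w) x) :=
      fun i j => integrable_of_cs (hd2 j j).continuous (hd2 i i).continuous (hs2 i i)
    calc D = ∑ i : Fin n, ∑ j : Fin n, ∫ x, (pderiv' i (pderiv' j w) x)^2 := by
          rw [hD]
          unfold hessFrobSq
          rw [integral_finset_sum _ (fun i _ => integrable_finset_sum _ (fun j _ => hIij i j))]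
          exact Finset.sum_congr rfl fun i _ => integral_finset_sum _ (fun j _ => hIij i j)
      _ = ∑ i : Fin n, ∑ j : Fin n,
            ∫ x, pderiv' j (pderiv' j w) x * pderiv' i (pderiv' i w) x :=
          Finset.sum_congr rfl fun i _ => Finset.sum_congr rfl fun j _ => key i j
      _ = ∑ i : Fin n,
            ∫ x, ∑ j : Fin n, pderiv' j (pderiv' j w) x * pderiv' i (pderiv' i w) x :=
          Finset.sum_congr rfl fun i _ =>
            (integral_finset_sum _ (fun j _ => hIjjii i j)).symm
      _ = ∫ x, ∑ i : Fin n, ∑ j : Fin n,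
            pderiv' j (pderiv' j w) x * pderiv' i (pderiv' i w) x :=
          (integral_finset_sum _ (fun i _ =>
            integrable_finset_sum _ (fun j _ => hIjjii i j))).symm
      _ = L := by
          rw [hL]
          apply integral_congr_ae
          filter_upwards with x
          rw [Finset.sum_comm, laplacian', sq, Finset.sum_mul_sum]
  -- conclude
  have hsplit : (∫ x, ((w x) ^ 2 + ‖gradient w x‖ ^ 2 + hessFrobSq w x)) = A + B + D := by
    have : (fun x => (w x) ^ 2 + ‖gradient w x‖ ^ 2 + hessFrobSq w x)
        = fun x => (w x) ^ 2 + (∑ i : Fin n, (pderiv' i w x) ^ 2) + hessFrobSq w x := by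
      funext x; rw [grad_norm_sq]
    have hIAB : Integrable (fun x => (w x) ^ 2 + ∑ i : Fin n, (pderiv' i w x) ^ 2) := hIA.add hIB
    rw [this, integral_add hIAB hID, integral_add hIA hIB]
  rw [hsplit]
  have hAL : A ≤ 16 * R^4 * L := by nlinarith
  nlinarith
end
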